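/- For all real x and all σ > 0: (√2/3) · (σ - x)(x + σ)³ σ³ / (σ² + x²)^{7/2} < 1. -/
import Mathlib


/-- For all x and σ > 0: (√2/3)(σ-x)(x+σ)³σ³/(σ²+x²)^{7/2} < 1. -/
theorem X_positivity (x σ : ℝ) (hσ : 0 < σ) :
    Real.sqrt 2 / 3 * ((σ - x) * (x + σ) ^ 3 * σ ^ 3) / (σ ^ 2 + x ^ 2) ^ ((7:ℝ)/2)
      < 1 := by
  have hApos : (0:ℝ) < σ ^ 2 + x ^ 2 := by positivity
  set s := Real.sqrt (σ ^ 2 + x ^ 2) with hs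
  have hspos : 0 < s := Real.sqrt_pos.mpr hApos
  have hs2 : s ^ 2 = σ ^ 2 + x ^ 2 := Real.sq_sqrt hApos.le
  have hrw : (σ ^ 2 + x ^ 2) ^ ((7:ℝ)/2) = s ^ 7 := by
    rw [hs, Real.sqrt_eq_rpow, ← Real.rpow_natCast ((σ ^ 2 + x ^ 2) ^ ((1:ℝ)/2)) 7,
      ← Real.rpow_mul hApos.le]
    norm_num
  rw [hrw, div_lt_one (by positivity)]
  have hσs : σ ≤ s := by nlinarith [sq_nonneg x]
  have hsqrt2 : Real.sqrt 2 < 3/2 := by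
    nlinarith [Real.sq_sqrt (by norm_num : (0:ℝ) ≤ 2), Real.sqrt_nonneg 2]
  have h3 : σ ^ 3 ≤ s ^ 3 := pow_le_pow_left₀ hσ.le hσs 3
  have hbc : (x + σ) ^ 2 * σ ^ 3 ≤ 2 * s ^ 5 := by
    nlinarith [sq_nonneg (σ - x), sq_nonneg (x + σ), pow_pos hσ 3, pow_pos hspos 3,
      pow_pos hspos 2, mul_nonneg (sq_nonneg (x + σ)) (pow_pos hσ 3).le]
  have hbcpos : 0 ≤ (x + σ) ^ 2 * σ ^ 3 := by positivity
  have hN : (σ - x) * (x + σ) ^ 3 * σ ^ 3 ≤ 2 * s ^ 7 := by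
    have h1 : (σ - x) * (x + σ) ≤ s ^ 2 := by nlinarith [sq_nonneg x]
    nlinarith [mul_le_mul_of_nonneg_left hbc (sq_nonneg s),
      mul_le_mul_of_nonneg_right h1 hbcpos]
  nlinarith [pow_pos hspos 7, Real.sqrt_nonneg 2,
    mul_le_mul_of_nonneg_left hN (Real.sqrt_nonneg 2)]
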